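/- arXiv:2405.15006 — 3 statements merged into one kernel-verified Lean document; each statement's English description precedes it below -/
import Mathlib

section
/- Consider the one-hidden-layer ReLU network R_θ(x) = Σ_{i=1}^k max(0, ⟨x, u_i⟩)·v_i, with path-lifting Φ(θ) = (u_i v_iᵀ)_{i=1,…,k} ∈ ℝ^{k·d·m}. If θ = (u_i, v_i)_i and θ' = (u'_i, v'_i)_i satisfy the same-sign condition coordinatewise (each coordinate of u_i and u'_i, and of v_i and v'_i, has product ≥ 0), then for every input x ∈ ℝ^d: ‖R_θ(x) − R_{θ'}(x)‖₁ ≤ max(‖x‖_∞, 1)·‖Φ(θ) − Φ(θ')‖₁. -/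
/-- One-hidden-layer ReLU network realization
`R_θ(x) = Σᵢ max(0, ⟨x, uᵢ⟩) vᵢ`. -/
def oneLayerRealization {k d m : ℕ} (u : Fin k → Fin d → ℝ) (v : Fin k → Fin m → ℝ)
    (x : Fin d → ℝ) : Fin m → ℝ :=
  fun j => ∑ i, max 0 (∑ a, x a * u i a) * v i j

lemma relu_key (s s' v v' : ℝ) (h : 0 ≤ v * v') :
    |max 0 s * v - max 0 s' * v'| ≤ |s * v - s' * v'| := by
  rcases le_total s 0 with hs | hs <;> rcases le_total s' 0 with hs' | hs'
  · rw [max_eq_left hs, max_eq_left hs']; simp [abs_nonneg]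
  · rw [max_eq_left hs, max_eq_right hs']
    have hp : s * v * (s' * v') ≤ 0 := by nlinarith [mul_nonpos_of_nonpos_of_nonneg hs hs']
    rcases abs_cases (0 * v - s' * v') with ⟨h1, h2⟩ | ⟨h1, h2⟩ <;>
      rcases abs_cases (s * v - s' * v') with ⟨h3, h4⟩ | ⟨h3, h4⟩ <;> nlinarith
  · rw [max_eq_right hs, max_eq_left hs']
    have hp : s * v * (s' * v') ≤ 0 := by nlinarith [mul_nonpos_of_nonneg_of_nonpos hs hs']
    rcases abs_cases (s * v - 0 * v') with ⟨h1, h2⟩ | ⟨h1, h2⟩ <;>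
      rcases abs_cases (s * v - s' * v') with ⟨h3, h4⟩ | ⟨h3, h4⟩ <;> nlinarith
  · rw [max_eq_right hs, max_eq_right hs']

/-- Rescaling-invariant Lipschitz bound in parameter space for a
one-hidden-layer ReLU network: under the coordinatewise same-sign condition,
`‖R_θ(x) − R_{θ'}(x)‖₁ ≤ max(‖x‖_∞, 1) · ‖Φ(θ) − Φ(θ')‖₁`. -/
theorem stmt_5 (k d m : ℕ) (u u' : Fin k → Fin d → ℝ) (v v' : Fin k → Fin m → ℝ)
    (hu : ∀ i a, 0 ≤ u i a * u' i a) (hv : ∀ i b, 0 ≤ v i b * v' i b)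
    (x : Fin d → ℝ) :
    ∑ j, |oneLayerRealization u v x j - oneLayerRealization u' v' x j| ≤
      max (⨆ a, |x a|) 1 *
        ∑ i, ∑ a, ∑ b, |u i a * v i b - u' i a * v' i b| := by
  set M := max (⨆ a, |x a|) 1 with hMdef
  have hMx : ∀ a, |x a| ≤ M := fun a =>
    le_max_of_le_left (le_ciSup (f := fun a => |x a|) (Set.Finite.bddAbove (Set.finite_range _)) a)
  calc ∑ j, |oneLayerRealization u v x j - oneLayerRealization u' v' x j|
      ≤ ∑ j, ∑ i, |max 0 (∑ a, x a * u i a) * v i j -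
          max 0 (∑ a, x a * u' i a) * v' i j| := by
        refine Finset.sum_le_sum fun j _ => ?_
        simp only [oneLayerRealization, ← Finset.sum_sub_distrib]
        exact Finset.abs_sum_le_sum_abs _ _
    _ ≤ ∑ j, ∑ i, |(∑ a, x a * u i a) * v i j - (∑ a, x a * u' i a) * v' i j| := by
        refine Finset.sum_le_sum fun j _ => Finset.sum_le_sum fun i _ => ?_
        exact relu_key _ _ _ _ (hv i j)
    _ ≤ ∑ j, ∑ i, ∑ a, M * |u i a * v i j - u' i a * v' i j| := by
        refine Finset.sum_le_sum fun j _ => Finset.sum_le_sum fun i _ => ?_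
        rw [Finset.sum_mul, Finset.sum_mul, ← Finset.sum_sub_distrib]
        refine (Finset.abs_sum_le_sum_abs _ _).trans (Finset.sum_le_sum fun a _ => ?_)
        have he : x a * u i a * v i j - x a * u' i a * v' i j =
            x a * (u i a * v i j - u' i a * v' i j) := by ring
        rw [he, abs_mul]
        exact mul_le_mul_of_nonneg_right (hMx a) (abs_nonneg _)
    _ = M * ∑ i, ∑ a, ∑ b, |u i a * v i b - u' i a * v' i b| := by
        simp only [← Finset.mul_sum]
        congr 1
        rw [Finset.sum_comm]
        exact Finset.sum_congr rfl fun i _ => Finset.sum_comm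
end

section
/- The same-sign condition in the path-metric Lipschitz bound cannot be dropped: on the two-edge chain network R_{(α,β)}(x) = β·max(0, α·x) with input and output dimension 1, the parameters θ = (1,1) and θ' = (−1,−1) satisfy Φ(θ) = Φ(θ') = 1 (the product of weights along the unique path), yet R_θ(1) = 1 ≠ 0 = R_{θ'}(1). Hence no constant C can satisfy |R_θ(x) − R_{θ'}(x)| ≤ C·‖Φ(θ) − Φ(θ')‖₁ for this pair at x = 1. -/
/-- Two-edge chain ReLU network `R_{(α,β)}(x) = β · max(0, α·x)`. -/
def chainRealization (α β x : ℝ) : ℝ := β * max 0 (α * x)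

/-- The same-sign condition cannot be dropped: for `θ = (1,1)` and
`θ' = (−1,−1)` the path-liftings coincide (`1·1 = (−1)·(−1)`), yet the
realizations differ at `x = 1`, so no constant `C` can give
`|R_θ(1) − R_{θ'}(1)| ≤ C · |Φ(θ) − Φ(θ')|`. -/
theorem stmt_7 :
    (1 : ℝ) * 1 = (-1 : ℝ) * (-1) ∧
    chainRealization 1 1 1 = 1 ∧
    chainRealization (-1) (-1) 1 = 0 ∧
    ¬ ∃ C : ℝ, |chainRealization 1 1 1 - chainRealization (-1) (-1) 1| ≤
        C * |(1 : ℝ) * 1 - (-1 : ℝ) * (-1)| := by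
  refine ⟨by norm_num, by norm_num [chainRealization], by norm_num [chainRealization], ?_⟩
  rintro ⟨C, hC⟩
  norm_num [chainRealization] at hC
end

section
/- Let R_θ(x) = M_L·ReLU(M_{L−1}·…·ReLU(M_1 x)) be a layered fully-connected ReLU network with weight matrices M_ℓ of dimensions at most W×W, and suppose the (1,∞) operator norm ‖M_ℓ‖_{1,∞} (maximum ℓ¹ norm of a row) satisfies ‖M_ℓ‖_{1,∞} ≤ R for all ℓ, with R ≥ 1, for both parameter vectors θ = (M_1,…,M_L) and θ' = (M'_1,…,M'_L). Then the ℓ¹-path-metric satisfies ‖Φ(θ) − Φ(θ')‖₁ ≤ L·W²·R^{L−1}·‖θ − θ'‖_∞, where Φ(θ) is the vector of products of weights along all input-to-output paths and ‖θ−θ'‖_∞ = max_ℓ max_{i,j} |(M_ℓ)_{ij} − (M'_ℓ)_{ij}|. -/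
open Finset

lemma pathsum {W : ℕ} : ∀ (n : ℕ) (C : Fin n → Matrix (Fin W) (Fin W) ℝ)
    (r : Fin n → ℝ), (∀ ℓ, 0 ≤ r ℓ) → (∀ ℓ i j, 0 ≤ C ℓ i j) →
    (∀ ℓ i, ∑ j, C ℓ i j ≤ r ℓ) →
    ∑ p : Fin (n + 1) → Fin W, ∏ ℓ : Fin n, C ℓ (p ℓ.succ) (p ℓ.castSucc)
      ≤ (W : ℝ) * ∏ ℓ, r ℓ
  | 0, C, r, hr, hC, hrow => by
      simp
  | (n+1), C, r, hr, hC, hrow => by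
      have key : ∑ p : Fin (n + 2) → Fin W,
            ∏ ℓ : Fin (n+1), C ℓ (p ℓ.succ) (p ℓ.castSucc)
          = ∑ q : Fin (n+1) → Fin W, ∑ j : Fin W,
              C 0 (q 0) j * ∏ ℓ : Fin n,
                C ℓ.succ (q ℓ.succ) (q ℓ.castSucc) := by
        rw [← Equiv.sum_comp (Fin.consEquiv (fun _ : Fin (n+2) => Fin W))]
        rw [Fintype.sum_prod_type, Finset.sum_comm]
        refine Finset.sum_congr rfl fun q _ => Finset.sum_congr rfl fun j _ => ?_
        rw [Fin.prod_univ_succ]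
        have h1 : ∀ ℓ : Fin n, (ℓ.succ : Fin (n+1)).castSucc = (ℓ.castSucc).succ :=
          fun ℓ => (Fin.succ_castSucc ℓ).symm
        simp only [Fin.consEquiv_apply, Fin.cons_succ, Fin.cons_zero, h1,
          Fin.succ_zero_eq_one, Fin.castSucc_zero]
        rfl
      rw [key]
      have hP : ∀ q : Fin (n+1) → Fin W,
          0 ≤ ∏ ℓ : Fin n, C ℓ.succ (q ℓ.succ) (q ℓ.castSucc) :=
        fun q => Finset.prod_nonneg fun ℓ _ => hC _ _ _
      calc ∑ q : Fin (n+1) → Fin W, ∑ j : Fin W,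
              C 0 (q 0) j * ∏ ℓ : Fin n, C ℓ.succ (q ℓ.succ) (q ℓ.castSucc)
          ≤ ∑ q : Fin (n+1) → Fin W,
              r 0 * ∏ ℓ : Fin n, C ℓ.succ (q ℓ.succ) (q ℓ.castSucc) := by
            refine Finset.sum_le_sum fun q _ => ?_
            rw [← Finset.sum_mul]
            exact mul_le_mul_of_nonneg_right (hrow 0 (q 0)) (hP q)
        _ = r 0 * ∑ q : Fin (n+1) → Fin W,
              ∏ ℓ : Fin n, C ℓ.succ (q ℓ.succ) (q ℓ.castSucc) := by
            rw [Finset.mul_sum]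
        _ ≤ r 0 * ((W : ℝ) * ∏ ℓ : Fin n, r ℓ.succ) := by
            refine mul_le_mul_of_nonneg_left ?_ (hr 0)
            exact pathsum n (fun ℓ => C ℓ.succ) (fun ℓ => r ℓ.succ)
              (fun ℓ => hr _) (fun ℓ => hC _) (fun ℓ => hrow _)
        _ = (W : ℝ) * ∏ ℓ : Fin (n+1), r ℓ := by
            rw [Fin.prod_univ_succ]; ring


lemma telescope : ∀ (n : ℕ) (a b : Fin n → ℝ),
    |∏ ℓ, a ℓ - ∏ ℓ, b ℓ| ≤
      ∑ k : Fin n, ∏ ℓ : Fin n,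
        (if ℓ < k then |b ℓ| else if ℓ = k then |a ℓ - b ℓ| else |a ℓ|)
  | 0, a, b => by simp
  | (n+1), a, b => by
    have IH := telescope n (fun ℓ => a ℓ.succ) (fun ℓ => b ℓ.succ)
    rw [Fin.prod_univ_succ a, Fin.prod_univ_succ b, Fin.sum_univ_succ]
    set A := ∏ ℓ : Fin n, a ℓ.succ with hA
    set B := ∏ ℓ : Fin n, b ℓ.succ with hB
    have step : |a 0 * A - b 0 * B| ≤ |a 0 - b 0| * |A| + |b 0| * |A - B| := by
      have : a 0 * A - b 0 * B = (a 0 - b 0) * A + b 0 * (A - B) := by ring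
      rw [this]
      exact (abs_add_le _ _).trans (by rw [abs_mul, abs_mul])
    refine step.trans (add_le_add ?_ ?_)
    · -- k = 0 term
      have : ∏ ℓ : Fin (n+1), (if ℓ < 0 then |b ℓ| else if ℓ = 0 then |a ℓ - b ℓ| else |a ℓ|)
          = |a 0 - b 0| * ∏ ℓ : Fin n, |a ℓ.succ| := by
        rw [Fin.prod_univ_succ]
        simp [Fin.succ_ne_zero]
      rw [this, hA, abs_prod]
    · -- remaining terms
      have heach : ∀ k : Fin n,
          ∏ ℓ : Fin (n+1), (if ℓ < k.succ then |b ℓ| else if ℓ = k.succ then |a ℓ - b ℓ| else |a ℓ|)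
          = |b 0| * ∏ ℓ : Fin n,
              (if ℓ < k then |b ℓ.succ| else if ℓ = k then |a ℓ.succ - b ℓ.succ| else |a ℓ.succ|) := by
        intro k
        rw [Fin.prod_univ_succ]
        simp only [Fin.succ_pos, if_true, Fin.succ_lt_succ_iff, Fin.succ_inj]
      calc |b 0| * |A - B| ≤ |b 0| * ∑ k : Fin n, ∏ ℓ : Fin n,
              (if ℓ < k then |b ℓ.succ| else if ℓ = k then |a ℓ.succ - b ℓ.succ| else |a ℓ.succ|) :=
            mul_le_mul_of_nonneg_left IH (abs_nonneg _)
        _ = _ := by rw [Finset.mul_sum]; exact Finset.sum_congr rfl fun k _ => (heach k).symm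

/-- ℓ¹-path-metric bound for a layered fully-connected ReLU network:
if all rows of the weight matrices of `θ = (M_1,…,M_L)` and `θ' = (M'_1,…,M'_L)`
have ℓ¹-norm at most `R ≥ 1`, then
`‖Φ(θ) − Φ(θ')‖₁ ≤ L·W²·R^(L−1)·‖θ−θ'‖_∞`, where paths are sequences
`j : Fin (L+1) → Fin W` and `Φ_p(θ) = Π_ℓ (M_ℓ)_{j_{ℓ+1}, j_ℓ}`. -/
theorem stmt_15 (L W : ℕ) (hL : 1 ≤ L) (R : ℝ) (hR : 1 ≤ R)
    (M M' : Fin L → Matrix (Fin W) (Fin W) ℝ)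
    (hM : ∀ ℓ i, ∑ j, |M ℓ i j| ≤ R)
    (hM' : ∀ ℓ i, ∑ j, |M' ℓ i j| ≤ R)
    (ε : ℝ) (hε : 0 ≤ ε)
    (hdist : ∀ ℓ i j, |M ℓ i j - M' ℓ i j| ≤ ε) :
    ∑ p : Fin (L + 1) → Fin W,
        |(∏ ℓ : Fin L, M ℓ (p ℓ.succ) (p ℓ.castSucc))
          - ∏ ℓ : Fin L, M' ℓ (p ℓ.succ) (p ℓ.castSucc)| ≤
      (L : ℝ) * (W : ℝ) ^ 2 * R ^ (L - 1) * ε := by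
  have hR0 : (0:ℝ) ≤ R := le_trans zero_le_one hR
  -- the mixed matrices
  set D : Fin L → Fin L → Matrix (Fin W) (Fin W) ℝ := fun k ℓ =>
    Matrix.of fun i j => if ℓ < k then |M' ℓ i j| else if ℓ = k then |M ℓ i j - M' ℓ i j| else |M ℓ i j|
    with hD
  set r : Fin L → Fin L → ℝ := fun k ℓ => if ℓ = k then (W:ℝ) * ε else R with hr
  have hrnn : ∀ k ℓ, 0 ≤ r k ℓ := by
    intro k ℓ; simp only [hr]; split
    · positivity
    · exact hR0
  have hDnn : ∀ k ℓ i j, 0 ≤ D k ℓ i j := by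
    intro k ℓ i j; simp only [hD, Matrix.of_apply]
    split
    · exact abs_nonneg _
    · split <;> exact abs_nonneg _
  have hrow : ∀ k ℓ i, ∑ j, D k ℓ i j ≤ r k ℓ := by
    intro k ℓ i; simp only [hD, hr, Matrix.of_apply]
    rcases lt_trichotomy ℓ k with h | h | h
    · simp only [if_pos h, if_neg (ne_of_lt h)]
      exact hM' ℓ i
    · subst h
      simp only [if_neg (lt_irrefl ℓ), if_pos (rfl : ℓ = ℓ)]
      calc ∑ j, |M ℓ i j - M' ℓ i j| ≤ ∑ _j : Fin W, ε :=
            Finset.sum_le_sum fun j _ => hdist ℓ i j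
        _ = (W:ℝ) * ε := by simp [mul_comm]
    · simp only [if_neg (not_lt_of_gt h), if_neg (ne_of_gt h)]
      exact hM ℓ i
  have hprod_r : ∀ k : Fin L, ∏ ℓ, r k ℓ = (W:ℝ) * ε * R ^ (L - 1) := by
    intro k
    rw [← Finset.mul_prod_erase univ (r k) (mem_univ k)]
    have h1 : r k k = (W:ℝ) * ε := by simp [hr]
    have h2 : ∏ ℓ ∈ univ.erase k, r k ℓ = R ^ (L - 1) := by
      rw [Finset.prod_congr rfl (fun ℓ hℓ => ?_), Finset.prod_const,
        Finset.card_erase_of_mem (mem_univ k), Finset.card_univ, Fintype.card_fin]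
      · exact (if_neg (Finset.ne_of_mem_erase hℓ) : r k ℓ = R)
    rw [h1, h2]
  calc ∑ p : Fin (L + 1) → Fin W,
        |(∏ ℓ : Fin L, M ℓ (p ℓ.succ) (p ℓ.castSucc))
          - ∏ ℓ : Fin L, M' ℓ (p ℓ.succ) (p ℓ.castSucc)|
      ≤ ∑ p : Fin (L + 1) → Fin W, ∑ k : Fin L,
          ∏ ℓ : Fin L, D k ℓ (p ℓ.succ) (p ℓ.castSucc) := by
        refine Finset.sum_le_sum fun p _ => ?_
        have := telescope L (fun ℓ => M ℓ (p ℓ.succ) (p ℓ.castSucc))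
          (fun ℓ => M' ℓ (p ℓ.succ) (p ℓ.castSucc))
        exact this
    _ = ∑ k : Fin L, ∑ p : Fin (L + 1) → Fin W,
          ∏ ℓ : Fin L, D k ℓ (p ℓ.succ) (p ℓ.castSucc) := Finset.sum_comm
    _ ≤ ∑ k : Fin L, (W:ℝ) * ∏ ℓ, r k ℓ :=
        Finset.sum_le_sum fun k _ =>
          pathsum L (D k) (r k) (hrnn k) (hDnn k) (hrow k)
    _ = (L : ℝ) * (W : ℝ) ^ 2 * R ^ (L - 1) * ε := by
        rw [Finset.sum_congr rfl fun k _ => by rw [hprod_r k]]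
        rw [Finset.sum_const, Finset.card_univ, Fintype.card_fin]
        push_cast; ring
end
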